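/- arXiv:2112.11971 — 6 statements merged into one kernel-verified Lean document; each statement's English description precedes it below -/
import Mathlib

section
/- Let ρ be a probability measure on a measurable space X, let η be a Markov kernel from X to a measurable space Y, let κ : X → PMF(ℕ) be measurable, and let μ : X → ℝ and a : X → ℝ be measurable with, for ρ-a.e. x, 0 < μ(x) and Σ'_{m} m·κ(x)(m) = μ(x). Let h : X × Y → ℝ be bounded measurable and suppose a is bounded. Then ∫_X [ Σ'_{m∈ℕ} κ(x)(m) · ∫_{(Fin m → Y)} ( a(x) + μ(x)^{−1} Σ_{i∈Fin m} ( h(x, y_i) − a(x) ) ) d(⊗_{i∈Fin m} η(x))(y) ] dρ(x) = ∫_X ∫_Y h(x, y) dη(x)(y) dρ(x). -/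
/-!
The identity already holds pointwise in `x`, before integrating against `ρ`. Given `m`, each
coordinate `yᵢ` has law `η x`, so by linearity the inner integral is
`a x + (μ x)⁻¹ * m * (I - a x)` with `I = ∫ h (x, ·) ∂(η x)`. This is affine in `m`, so averaging
over `m ∼ κ x`, whose mean is `μ x ≠ 0`, gives `a x + (I - a x) = I`.
-/

open MeasureTheory ProbabilityTheory

namespace PMF

variable {α : Type*} (p : PMF α)

lemma summable_toReal : Summable fun a => (p a).toReal :=
  ENNReal.summable_toReal (p.tsum_coe ▸ ENNReal.one_ne_top)

lemma tsum_toReal : ∑' a, (p a).toReal = 1 := by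
  rw [← ENNReal.tsum_toReal_eq p.apply_ne_top, p.tsum_coe, ENNReal.toReal_one]

lemma tsum_toReal_mul_const_add_inv_mean_mul {g : α → ℝ} {μ : ℝ}
    (hμ : ∑' a, g a * (p a).toReal = μ) (hμ0 : μ ≠ 0) (c d : ℝ) :
    ∑' a, (p a).toReal * (c + μ⁻¹ * (g a * d)) = c + d := by
  have hg : Summable fun a => g a * (p a).toReal := by
    by_contra hg
    exact hμ0 (hμ ▸ tsum_eq_zero_of_not_summable hg)
  calc ∑' a, (p a).toReal * (c + μ⁻¹ * (g a * d))
      = ∑' a, ((p a).toReal * c + μ⁻¹ * d * (g a * (p a).toReal)) :=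
        tsum_congr fun a => by ring
    _ = (∑' a, (p a).toReal) * c + μ⁻¹ * d * ∑' a, g a * (p a).toReal := by
        rw [(p.summable_toReal.mul_right c).tsum_add (hg.mul_left _), tsum_mul_right,
          tsum_mul_left]
    _ = c + d := by rw [p.tsum_toReal, hμ]; field_simp

end PMF

namespace MeasureTheory

variable {ι Y : Type*} [Fintype ι] [MeasurableSpace Y] {ν : Measure Y} [IsProbabilityMeasure ν]
  {f : Y → ℝ}

lemma integrable_sum_comp_eval_pi (hf : Integrable f ν) :
    Integrable (fun y => ∑ i, f (y i)) (Measure.pi fun _ : ι => ν) :=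
  integrable_finsetSum _ fun _ _ => integrable_comp_eval hf

lemma integral_sum_comp_eval_pi (hf : Integrable f ν) :
    ∫ y, ∑ i, f (y i) ∂(Measure.pi fun _ : ι => ν) = Fintype.card ι * ∫ z, f z ∂ν := by
  have h_eval (i : ι) : ∫ y, f (y i) ∂(Measure.pi fun _ : ι => ν) = ∫ z, f z ∂ν :=
    integral_comp_eval hf.aestronglyMeasurable
  rw [integral_finsetSum _ fun _ _ => integrable_comp_eval hf]
  simp only [h_eval, Finset.sum_const, Finset.card_univ, nsmul_eq_mul]

lemma integral_const_add_mul_sum_sub_pi (hf : Integrable f ν) (c s : ℝ) :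
    ∫ y, (c + s * ∑ i, (f (y i) - c)) ∂(Measure.pi fun _ : ι => ν)
      = c + s * (Fintype.card ι * (∫ z, f z ∂ν - c)) := by
  have hfc : Integrable (fun z => f z - c) ν := hf.sub (integrable_const c)
  rw [integral_add (f := fun _ => c) (integrable_const c)
      ((integrable_sum_comp_eval_pi hfc).const_mul s),
    integral_const, integral_const_mul, integral_sum_comp_eval_pi hfc,
    integral_sub hf (integrable_const c)]
  simp

end MeasureTheory

theorem multifidelity_weighting_unbiased_general
    {X Y : Type*} [MeasurableSpace X] [MeasurableSpace Y]
    (ρ : Measure X)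
    (η : Kernel X Y) [IsMarkovKernel η]
    (κ : X → PMF ℕ)
    (μ a : X → ℝ)
    (hae : ∀ᵐ x ∂ρ, 0 < μ x ∧ ∑' m : ℕ, (m : ℝ) * ((κ x) m).toReal = μ x)
    (h : X × Y → ℝ) (hhm : Measurable h)
    (Dh : ℝ) (hhb : ∀ p, |h p| ≤ Dh) :
    ∫ x, (∑' m : ℕ, ((κ x) m).toReal *
        ∫ y : Fin m → Y,
          (a x + (μ x)⁻¹ * ∑ i : Fin m, (h (x, y i) - a x))
          ∂(Measure.pi fun _ : Fin m => η x)) ∂ρ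
      = ∫ x, ∫ y, h (x, y) ∂(η x) ∂ρ := by
  refine integral_congr_ae ?_
  filter_upwards [hae] with x ⟨hμ_pos, hμ_mean⟩
  have hh_int : Integrable (fun y => h (x, y)) (η x) :=
    Integrable.of_bound (hhm.comp measurable_prodMk_left).aestronglyMeasurable Dh
      (Filter.Eventually.of_forall fun y => (Real.norm_eq_abs _).trans_le (hhb (x, y)))
  simp_rw [integral_const_add_mul_sum_sub_pi hh_int, Fintype.card_fin]
  exact ((κ x).tsum_toReal_mul_const_add_inv_mean_mul hμ_mean hμ_pos.ne' (a x)
    (∫ y, h (x, y) ∂(η x) - a x)).trans (add_sub_cancel _ _)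

/-- Accuracy of multifidelity inference (Proposition 1): the multifidelity
likelihood-free weighting `ω_mf = a(x) + μ(x)⁻¹ ∑_{i<m} (h(x, yᵢ) - a(x))`,
where the number `m` of coupled high-fidelity simulations is drawn from
`κ(x)` with mean `μ(x) > 0` and each `yᵢ` is drawn from `η(x)`, has the same
expectation as the high-fidelity weighting `h`. -/
theorem multifidelity_weighting_unbiased
    {X Y : Type*} [MeasurableSpace X] [MeasurableSpace Y]
    (ρ : Measure X) [IsProbabilityMeasure ρ]
    (η : Kernel X Y) [IsMarkovKernel η]
    (κ : X → PMF ℕ) (hκ : ∀ m : ℕ, Measurable fun x => κ x m)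
    (μ a : X → ℝ) (hμ : Measurable μ) (ha : Measurable a)
    (hae : ∀ᵐ x ∂ρ, 0 < μ x ∧ ∑' m : ℕ, (m : ℝ) * ((κ x) m).toReal = μ x)
    (h : X × Y → ℝ) (hhm : Measurable h)
    (Dh : ℝ) (hhb : ∀ p, |h p| ≤ Dh)
    (Da : ℝ) (hab : ∀ x, |a x| ≤ Da) :
    ∫ x, (∑' m : ℕ, ((κ x) m).toReal *
        ∫ y : Fin m → Y,
          (a x + (μ x)⁻¹ * ∑ i : Fin m, (h (x, y i) - a x))
          ∂(Measure.pi fun _ : Fin m => η x)) ∂ρ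
      = ∫ x, ∫ y, h (x, y) ∂(η x) ∂ρ :=
  multifidelity_weighting_unbiased_general ρ η κ μ a hae h hhm Dh hhb
end

section
/- Given a real number a, a positive real μ, an i.i.d. sequence (W_i)_{i≥1} of square-integrable real random variables, and a square-integrable nonnegative-integer-valued random variable M, independent of the sequence (W_i), with E[M] = μ, define the multifidelity correction estimator S = a + μ^{−1} Σ_{i=1}^{M} (W_i − a). Then E[S²] = (E[W_1])² + μ^{−1} [ Var(W_1) + (Var(M)/μ) (E[W_1] − a)² ]. -/
/-!
By independence of `M` from the sequence, `E[S²] = E[g(M)]` with `g(n)` the second moment of the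
estimator for a fixed number `n` of samples. Writing `m = E[W₀]` and `σ² = Var(W₀)`, the sum of `n`
i.i.d. terms has mean `n m` and variance `n σ²`, so `E[(a + c X)²] = (a + c E[X])² + c² Var(X)` gives
`g(n) = (a₀ + μ⁻¹ (m - a₀) n)² + μ⁻² σ² n`. The same identity, now applied to `X = M`, computes
`E[g(M)]` from `E[M] = μ` and `Var(M)`.
-/

open MeasureTheory ProbabilityTheory

namespace ProbabilityTheory

variable {Ω α β : Type*} [MeasurableSpace Ω] [MeasurableSpace α] [MeasurableSpace β]
  {P : Measure Ω}

theorem IndepFun.integral_comp_eq_integral_integral [IsProbabilityMeasure P]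
    {X : Ω → α} {Y : Ω → β}
    (hX : Measurable X) (hY : Measurable Y) (hXY : IndepFun X Y P) {G : α → β → ℝ}
    (hG : Measurable (Function.uncurry G)) (hGY : ∀ a, Integrable (fun ω => G a (Y ω)) P)
    (hGXY : Integrable (fun ω => ∫ ω', ‖G (X ω) (Y ω')‖ ∂P) P) :
    ∫ ω, G (X ω) (Y ω) ∂P = ∫ ω, ∫ ω', G (X ω) (Y ω') ∂P ∂P := by
  have hprod := (indepFun_iff_map_prod_eq_prod_map_map hX.aemeasurable hY.aemeasurable).1 hXY
  have hG' : StronglyMeasurable (Function.uncurry G) := hG.stronglyMeasurable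
  have hint : Integrable (Function.uncurry G) ((P.map X).prod (P.map Y)) := by
    refine (integrable_prod_iff hG'.aestronglyMeasurable).2 ⟨ae_of_all _ fun a => ?_, ?_⟩
    · exact (integrable_map_measure
        (hG'.comp_measurable measurable_prodMk_left).aestronglyMeasurable hY.aemeasurable).2 (hGY a)
    · have hmeas : StronglyMeasurable (fun a => ∫ y, ‖G a y‖ ∂(P.map Y)) :=
        hG'.norm.integral_prod_right'
      refine (integrable_map_measure hmeas.aestronglyMeasurable hX.aemeasurable).2 ?_
      refine hGXY.congr (ae_of_all _ fun ω => ?_)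
      exact (integral_map hY.aemeasurable
        (hG'.comp_measurable measurable_prodMk_left).norm.aestronglyMeasurable).symm
  calc ∫ ω, G (X ω) (Y ω) ∂P
      = ∫ p, Function.uncurry G p ∂(P.map fun ω => (X ω, Y ω)) :=
        (integral_map (hX.prodMk hY).aemeasurable hG'.aestronglyMeasurable).symm
    _ = ∫ a, ∫ y, G a y ∂(P.map Y) ∂(P.map X) := by rw [hprod, integral_prod _ hint]; rfl
    _ = ∫ ω, ∫ ω', G (X ω) (Y ω') ∂P ∂P := by
        refine (integral_map hX.aemeasurable
          (hG'.integral_prod_right' (ν := P.map Y)).aestronglyMeasurable).trans ?_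
        refine integral_congr_ae (ae_of_all _ fun ω => ?_)
        exact integral_map hY.aemeasurable
          (hG'.comp_measurable measurable_prodMk_left).aestronglyMeasurable

theorem integral_const_add_mul_sq [IsProbabilityMeasure P] {X : Ω → ℝ} (hX : MemLp X 2 P)
    (a c : ℝ) :
    ∫ ω, (a + c * X ω) ^ 2 ∂P = (a + c * ∫ ω, X ω ∂P) ^ 2 + c ^ 2 * variance X P := by
  have hY : MemLp (fun ω => a + c * X ω) 2 P := (memLp_const a).add (hX.const_mul c)
  have hvar := variance_eq_sub hY
  rw [variance_const_add (hX.const_mul c).aestronglyMeasurable, variance_const_mul,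
    integral_add (integrable_const a) ((hX.integrable one_le_two).const_mul c),
    integral_const_mul, integral_const, probReal_univ, one_smul] at hvar
  simp only [Pi.pow_apply] at hvar
  linarith

variable {W : ℕ → Ω → ℝ}

theorem integral_sum_range_of_identDistrib (hident : ∀ i, IdentDistrib (W i) (W 0) P P)
    (hint : Integrable (W 0) P) (n : ℕ) :
    ∫ ω, ∑ i ∈ Finset.range n, W i ω ∂P = n * ∫ ω, W 0 ω ∂P := by
  rw [integral_finsetSum _ fun i _ => (hident i).integrable_iff.2 hint]
  simp [(hident _).integral_eq]

theorem variance_sum_range_of_iIndepFun (hindep : iIndepFun W P)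
    (hident : ∀ i, IdentDistrib (W i) (W 0) P P) (hsq : MemLp (W 0) 2 P) (n : ℕ) :
    variance (∑ i ∈ Finset.range n, W i) P = n * variance (W 0) P := by
  rw [IndepFun.variance_sum (fun i _ => (hident i).memLp_iff.2 hsq)
    fun i _ j _ hij => hindep.indepFun hij]
  simp [(hident _).variance_eq]

theorem integral_const_add_mul_sum_range_sub_sq [IsProbabilityMeasure P] (hindep : iIndepFun W P)
    (hident : ∀ i, IdentDistrib (W i) (W 0) P P) (hsq : MemLp (W 0) 2 P) (n : ℕ) (a b c : ℝ) :
    ∫ ω, (a + c * ∑ i ∈ Finset.range n, (W i ω - b)) ^ 2 ∂P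
      = (a + c * (∫ ω, W 0 ω ∂P - b) * n) ^ 2 + c ^ 2 * variance (W 0) P * n := by
  have hsum : MemLp (∑ i ∈ Finset.range n, W i) 2 P :=
    memLp_finsetSum' _ fun i _ => (hident i).memLp_iff.2 hsq
  have hshift (ω : Ω) : a + c * ∑ i ∈ Finset.range n, (W i ω - b)
      = a - c * n * b + c * (∑ i ∈ Finset.range n, W i) ω := by
    rw [Finset.sum_apply, Finset.sum_sub_distrib, Finset.sum_const, Finset.card_range,
      nsmul_eq_mul]
    ring
  simp only [hshift]
  rw [integral_const_add_mul_sq hsum]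
  simp only [Finset.sum_apply]
  rw [integral_sum_range_of_identDistrib hident (hsq.integrable one_le_two),
    variance_sum_range_of_iIndepFun hindep hident hsq]
  ring

end ProbabilityTheory

/-- General second-moment formula for the multifidelity correction estimator:
with `(Wᵢ)` i.i.d. square-integrable and `M` a square-integrable
nonnegative-integer-valued random variable independent of the sequence with
`E[M] = μ > 0`, the estimator `S = a₀ + μ⁻¹ ∑_{i < M} (Wᵢ - a₀)` satisfies
`E[S²] = (E[W₀])² + μ⁻¹ (Var(W₀) + (Var(M)/μ) (E[W₀] - a₀)²)`. -/
theorem multifidelity_correction_second_moment_general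
    {Ω : Type*} [MeasurableSpace Ω] {P : Measure Ω} [IsProbabilityMeasure P]
    (a₀ μ : ℝ) (hμ : 0 < μ)
    (W : ℕ → Ω → ℝ) (hWm : ∀ i, Measurable (W i))
    (hindep : iIndepFun W P)
    (hident : ∀ i, IdentDistrib (W i) (W 0) P P)
    (hsq : ∀ i, MemLp (W i) 2 P)
    (M : Ω → ℕ) (hM : Measurable M)
    (hMsq : MemLp (fun ω => (M ω : ℝ)) 2 P)
    (hMindep : IndepFun M (fun ω i => W i ω) P)
    (hMmean : ∫ ω, (M ω : ℝ) ∂P = μ) :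
    ∫ ω, (a₀ + μ⁻¹ * ∑ i ∈ Finset.range (M ω), (W i ω - a₀)) ^ 2 ∂P
      = (∫ ω, W 0 ω ∂P) ^ 2
        + μ⁻¹ * (variance (W 0) P
          + (variance (fun ω => (M ω : ℝ)) P / μ) * ((∫ ω, W 0 ω ∂P) - a₀) ^ 2) := by
  set m := ∫ ω, W 0 ω ∂P
  set σ2 := variance (W 0) P
  let G : ℕ → (ℕ → ℝ) → ℝ := fun n w =>
    (a₀ + μ⁻¹ * ∑ i ∈ Finset.range n, (w i - a₀)) ^ 2
  have hG : Measurable (Function.uncurry G) :=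
    measurable_from_prod_countable_right fun n => by
      change Measurable fun w : ℕ → ℝ => (a₀ + μ⁻¹ * ∑ i ∈ Finset.range n, (w i - a₀)) ^ 2
      fun_prop
  have hGW (n : ℕ) : ∫ ω, G n (fun i => W i ω) ∂P
      = (a₀ + μ⁻¹ * (m - a₀) * n) ^ 2 + μ⁻¹ ^ 2 * σ2 * n :=
    integral_const_add_mul_sum_range_sub_sq hindep hident (hsq 0) n a₀ a₀ μ⁻¹
  have hGint (n : ℕ) : Integrable (fun ω => G n (fun i => W i ω)) P :=
    have hsum := memLp_finsetSum' (Finset.range n) fun i _ => (hsq i).sub (memLp_const a₀)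
    ((memLp_const a₀).add (hsum.const_mul μ⁻¹)).integrable_sq.congr
      (ae_of_all _ fun ω => by simp [G])
  have hMint : Integrable (fun ω => (M ω : ℝ)) P := hMsq.integrable one_le_two
  have hquad : Integrable (fun ω => (a₀ + μ⁻¹ * (m - a₀) * M ω) ^ 2) P :=
    ((memLp_const a₀).add (hMsq.const_mul _)).integrable_sq
  have hnorm : Integrable (fun ω => ∫ ω', ‖G (M ω) (fun i => W i ω')‖ ∂P) P := by
    refine (hquad.add (hMint.const_mul (μ⁻¹ ^ 2 * σ2))).congr (ae_of_all _ fun ω => ?_)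
    simp only [Real.norm_of_nonneg (sq_nonneg _), G]
    exact (hGW (M ω)).symm
  change ∫ ω, G (M ω) (fun i => W i ω) ∂P = _
  rw [hMindep.integral_comp_eq_integral_integral hM (measurable_pi_lambda _ hWm) hG hGint hnorm]
  simp only [hGW]
  rw [integral_add hquad (hMint.const_mul _), integral_const_add_mul_sq hMsq, integral_const_mul,
    hMmean]
  field_simp
  ring
end

section
/- Given a real number a, a positive real μ, an i.i.d. sequence (W_i)_{i≥1} of square-integrable real random variables, and a random variable M, independent of the sequence (W_i), having the geometric distribution on the nonnegative integers with success probability p = 1/(1+μ) (so that E[M] = μ), define the multifidelity correction estimator S = a + μ^{−1} Σ_{i=1}^{M} (W_i − a). Then E[S²] = (E[W_1])² + E[(W_1 − a)²]/μ + (E[W_1] − a)². -/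
/-!
Conditionally on `M = n`, the estimator is `a₀ + μ⁻¹ Sₙ`, where `Sₙ` is a sum of `n` i.i.d. copies
of `X = W₀ - a₀`, so its second moment `μ⁻² n Var X + (a₀ + μ⁻¹ n E X)²` is a quadratic polynomial
in `n`. Since `M` is independent of the sequence, `E[S²]` is the average of this polynomial
against the geometric law, whose moments are `E M = μ` and `E M² = μ + 2μ²`. The excess of `E M²`
over the Poisson value `μ + μ²` is what produces the extra term `(E W₀ - a₀)²`.
-/

open MeasureTheory ProbabilityTheory Finset

theorem hasSum_coe_mul_coe_sub_one_mul_geometric {𝕜 : Type*} [NormedField 𝕜] [CompleteSpace 𝕜]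
    [CharZero 𝕜] {q : 𝕜} (hq : ‖q‖ < 1) :
    HasSum (fun n : ℕ ↦ (n : 𝕜) * (n - 1) * q ^ n) (2 * q ^ 2 / (1 - q) ^ 3) := by
  refine (hasSum_nat_add_iff' 2).mp ?_
  have hterm (n : ℕ) : ((n + 2 : ℕ) : 𝕜) * ((n + 2 : ℕ) - 1) * q ^ (n + 2)
      = 2 * q ^ 2 * ((n + 2).choose 2 * q ^ n) := by
    rw [Nat.cast_choose_two]
    ring
  simp only [hterm, sum_range_succ, sum_range_zero]
  convert! (hasSum_choose_mul_geometric_of_norm_lt_one 2 hq).mul_left (2 * q ^ 2) using 1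
  push_cast
  ring

theorem hasSum_geometric_weight_mul_quadratic {μ : ℝ} (hμ : 0 ≤ μ) (A B C : ℝ) :
    HasSum (fun n : ℕ ↦ 1 / (1 + μ) * (1 - 1 / (1 + μ)) ^ n * (A + B * n + C * n ^ 2))
      (A + B * μ + C * (μ + 2 * μ ^ 2)) := by
  have hq : 1 - 1 / (1 + μ) = μ / (1 + μ) := by field_simp; ring
  rw [hq]
  have hq0 : 0 ≤ μ / (1 + μ) := by positivity
  have hq1 : μ / (1 + μ) < 1 := by rw [div_lt_one (by positivity)]; linarith
  have hqn : ‖μ / (1 + μ)‖ < 1 := by rwa [Real.norm_of_nonneg hq0]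
  -- `n ^ 2 = n * (n - 1) + n`
  have h := (((hasSum_geometric_of_lt_one hq0 hq1).mul_left A).add
    (((hasSum_coe_mul_geometric_of_norm_lt_one hqn).mul_left (B + C)).add
      ((hasSum_coe_mul_coe_sub_one_mul_geometric hqn).mul_left C))).mul_left (1 / (1 + μ))
  convert! h.congr_fun fun n ↦ ?_ using 1
  · field_simp
    ring
  · ring

namespace ProbabilityTheory.IndepFun

variable {Ω β : Type*} [MeasurableSpace Ω] [MeasurableSpace β] {P : Measure Ω}
  {N : Ω → ℕ} {Y : Ω → β}

theorem integral_indicator_eq_measureReal_mul (hNY : IndepFun N Y P) (hN : Measurable N)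
    {f : β → ℝ} (hf : Measurable f) (hfY : AEStronglyMeasurable (fun ω ↦ f (Y ω)) P) (n : ℕ) :
    ∫ ω, {ω | N ω = n}.indicator (fun ω ↦ f (Y ω)) ω ∂P
      = P.real {ω | N ω = n} * ∫ ω, f (Y ω) ∂P := by
  have hset : MeasurableSet {ω | N ω = n} := hN (measurableSet_singleton n)
  have hind : IndepFun ({ω | N ω = n}.indicator (1 : Ω → ℝ)) (fun ω ↦ f (Y ω)) P :=
    hNY.comp (measurable_one.indicator (measurableSet_singleton n)) hf
  have hprod : {ω | N ω = n}.indicator (fun ω ↦ f (Y ω))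
      = fun ω ↦ {ω | N ω = n}.indicator (1 : Ω → ℝ) ω * f (Y ω) := by
    ext ω
    by_cases hω : N ω = n <;> simp [hω]
  rw [hprod, hind.integral_fun_mul_eq_mul_integral
    (aestronglyMeasurable_one.indicator hset) hfY, integral_indicator_one hset]

theorem integral_eq_of_hasSum_measureReal_mul (hNY : IndepFun N Y P) (hN : Measurable N)
    {g : ℕ → β → ℝ} (hg : ∀ n, Measurable (g n)) (hg0 : ∀ n y, 0 ≤ g n y)
    (hgY : ∀ n, Integrable (fun ω ↦ g n (Y ω)) P) {s : ℝ}
    (hs : HasSum (fun n ↦ P.real {ω | N ω = n} * ∫ ω, g n (Y ω) ∂P) s) :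
    ∫ ω, g (N ω) (Y ω) ∂P = s := by
  let F : ℕ → Ω → ℝ := fun n ↦ {ω | N ω = n}.indicator (fun ω ↦ g n (Y ω))
  have hF (n : ℕ) : ∫ ω, F n ω ∂P = P.real {ω | N ω = n} * ∫ ω, g n (Y ω) ∂P :=
    hNY.integral_indicator_eq_measureReal_mul hN (hg n) (hgY n).aestronglyMeasurable n
  have hF_int (n : ℕ) : Integrable (F n) P := (hgY n).indicator (hN (measurableSet_singleton n))
  have hF_norm (n : ℕ) : ∫ ω, ‖F n ω‖ ∂P = ∫ ω, F n ω ∂P := by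
    refine integral_congr_ae (ae_of_all _ fun ω ↦ Real.norm_of_nonneg ?_)
    exact Set.indicator_nonneg (fun ω _ ↦ hg0 n (Y ω)) ω
  have hF_sum (ω : Ω) : ∑' n, F n ω = g (N ω) (Y ω) := by
    rw [tsum_eq_single (N ω) fun n hn ↦ ?_]
    · simp [F]
    · simp [F, Ne.symm hn]
  rw [← hs.tsum_eq, ← funext hF, integral_tsum_of_summable_integral_norm hF_int
    (by simpa only [hF_norm, hF] using hs.summable)]
  simp only [hF_sum]

end ProbabilityTheory.IndepFun

section IdentDistrib

variable {Ω : Type*} [MeasurableSpace Ω] {P : Measure Ω} {X : ℕ → Ω → ℝ}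

theorem integral_sum_range_of_identDistrib (hX : ∀ i, Integrable (X i) P)
    (hident : ∀ i, IdentDistrib (X i) (X 0) P P) (m : ℕ) :
    ∫ ω, ∑ i ∈ range m, X i ω ∂P = m * ∫ ω, X 0 ω ∂P := by
  simp [integral_finsetSum _ fun i _ ↦ hX i, fun i ↦ (hident i).integral_eq]

theorem variance_sum_range_of_identDistrib (hX : ∀ i, MemLp (X i) 2 P)
    (hindep : Pairwise fun i j ↦ IndepFun (X i) (X j) P)
    (hident : ∀ i, IdentDistrib (X i) (X 0) P P) (m : ℕ) :
    variance (∑ i ∈ range m, X i) P = m * variance (X 0) P := by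
  simp [IndepFun.variance_sum (fun i _ ↦ hX i) fun i _ j _ hij ↦ hindep hij,
    fun i ↦ (hident i).variance_eq]

theorem integral_const_add_mul_sum_range_sq [IsProbabilityMeasure P]
    (hX : ∀ i, MemLp (X i) 2 P) (hindep : Pairwise fun i j ↦ IndepFun (X i) (X j) P)
    (hident : ∀ i, IdentDistrib (X i) (X 0) P P) (b c : ℝ) (m : ℕ) :
    ∫ ω, (b + c * ∑ i ∈ range m, X i ω) ^ 2 ∂P
      = c ^ 2 * m * variance (X 0) P + (b + c * m * ∫ ω, X 0 ω ∂P) ^ 2 := by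
  have hS : MemLp (fun ω ↦ ∑ i ∈ range m, X i ω) 2 P := memLp_finsetSum _ fun i _ ↦ hX i
  have hvar := variance_eq_sub (X := fun ω ↦ b + c * ∑ i ∈ range m, X i ω)
    ((memLp_const b).add (hS.const_mul c))
  rw [variance_const_add (hS.const_mul c).aestronglyMeasurable, variance_const_mul,
    ← Finset.sum_fn, variance_sum_range_of_identDistrib hX hindep hident,
    integral_add (integrable_const b) ((hS.integrable one_le_two).const_mul c), integral_const_mul,
    integral_sum_range_of_identDistrib (fun i ↦ (hX i).integrable one_le_two) hident] at hvar
  simp only [Pi.pow_apply, integral_const, probReal_univ, smul_eq_mul, one_mul] at hvar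
  linarith

end IdentDistrib

theorem multifidelity_correction_second_moment_geometric_general
    {Ω : Type*} [MeasurableSpace Ω] {P : Measure Ω} [IsProbabilityMeasure P]
    (a₀ μ : ℝ) (hμ : 0 < μ)
    (W : ℕ → Ω → ℝ)
    (hindep : iIndepFun W P)
    (hident : ∀ i, IdentDistrib (W i) (W 0) P P)
    (hsq : ∀ i, MemLp (W i) 2 P)
    (M : Ω → ℕ) (hM : Measurable M)
    (hMindep : IndepFun M (fun ω i => W i ω) P)
    (hMdist : ∀ m : ℕ,
      P {ω | M ω = m} = ENNReal.ofReal
        ((1 / (1 + μ)) * (1 - 1 / (1 + μ)) ^ m)) :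
    ∫ ω, (a₀ + μ⁻¹ * ∑ i ∈ Finset.range (M ω), (W i ω - a₀)) ^ 2 ∂P
      = (∫ ω, W 0 ω ∂P) ^ 2 + (∫ ω, (W 0 ω - a₀) ^ 2 ∂P) / μ
        + ((∫ ω, W 0 ω ∂P) - a₀) ^ 2 := by
  set X : ℕ → Ω → ℝ := fun i ω ↦ W i ω - a₀
  have hX (i : ℕ) : MemLp (X i) 2 P := (hsq i).sub (memLp_const a₀)
  have hXindep : Pairwise fun i j ↦ IndepFun (X i) (X j) P := fun i j hij ↦
    (hindep.indepFun hij).comp (measurable_sub_const a₀) (measurable_sub_const a₀)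
  have hXident (i : ℕ) : IdentDistrib (X i) (X 0) P P := (hident i).comp (measurable_sub_const a₀)
  set e := ∫ ω, X 0 ω ∂P with he
  set v := variance (X 0) P with hv
  have hweight (n : ℕ) : P.real {ω | M ω = n} = 1 / (1 + μ) * (1 - 1 / (1 + μ)) ^ n := by
    have hq : 0 ≤ 1 - 1 / (1 + μ) := by rw [sub_nonneg, div_le_one (by positivity)]; linarith
    rw [measureReal_def, hMdist, ENNReal.toReal_ofReal (by positivity)]
  have hmoment (n : ℕ) : ∫ ω, (a₀ + μ⁻¹ * ∑ i ∈ range n, X i ω) ^ 2 ∂P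
      = a₀ ^ 2 + (μ⁻¹ ^ 2 * v + 2 * a₀ * μ⁻¹ * e) * n + μ⁻¹ ^ 2 * e ^ 2 * n ^ 2 := by
    rw [integral_const_add_mul_sum_range_sq hX hXindep hXident]
    ring
  have hmean : ∫ ω, W 0 ω ∂P = e + a₀ := by
    rw [he, integral_sub ((hsq 0).integrable one_le_two) (integrable_const a₀)]
    simp
  have hsecond : ∫ ω, (W 0 ω - a₀) ^ 2 ∂P = v + e ^ 2 := by
    rw [hv, variance_eq_sub (hX 0), sub_add_cancel]
    rfl
  rw [hMindep.integral_eq_of_hasSum_measureReal_mul hM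
    (g := fun n w ↦ (a₀ + μ⁻¹ * ∑ i ∈ range n, (w i - a₀)) ^ 2) (by fun_prop)
    (fun _ _ ↦ sq_nonneg _)
    (fun n ↦ ((memLp_const a₀).add
      ((memLp_finsetSum _ fun i _ ↦ hX i).const_mul μ⁻¹)).integrable_sq)
    ((hasSum_geometric_weight_mul_quadratic hμ.le (a₀ ^ 2) (μ⁻¹ ^ 2 * v + 2 * a₀ * μ⁻¹ * e)
      (μ⁻¹ ^ 2 * e ^ 2)).congr_fun fun n ↦ by rw [hweight, hmoment]), hmean, hsecond]
  field_simp
  ring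

/-- Second moment of the multifidelity correction estimator with a geometric
number of high-fidelity simulations: with `(Wᵢ)` i.i.d. square-integrable and
`M` geometric on `ℕ` with success probability `p = 1/(1+μ)` (so `E[M] = μ`),
independent of the sequence, `S = a₀ + μ⁻¹ ∑_{i < M} (Wᵢ - a₀)` satisfies
`E[S²] = (E[W₀])² + E[(W₀ - a₀)²]/μ + (E[W₀] - a₀)²`. -/
theorem multifidelity_correction_second_moment_geometric
    {Ω : Type*} [MeasurableSpace Ω] {P : Measure Ω} [IsProbabilityMeasure P]
    (a₀ μ : ℝ) (hμ : 0 < μ)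
    (W : ℕ → Ω → ℝ) (hWm : ∀ i, Measurable (W i))
    (hindep : iIndepFun W P)
    (hident : ∀ i, IdentDistrib (W i) (W 0) P P)
    (hsq : ∀ i, MemLp (W i) 2 P)
    (M : Ω → ℕ) (hM : Measurable M)
    (hMindep : IndepFun M (fun ω i => W i ω) P)
    (hMdist : ∀ m : ℕ,
      P {ω | M ω = m} = ENNReal.ofReal
        ((1 / (1 + μ)) * (1 - 1 / (1 + μ)) ^ m)) :
    ∫ ω, (a₀ + μ⁻¹ * ∑ i ∈ Finset.range (M ω), (W i ω - a₀)) ^ 2 ∂P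
      = (∫ ω, W 0 ω ∂P) ^ 2 + (∫ ω, (W 0 ω - a₀) ^ 2 ∂P) / μ
        + ((∫ ω, W 0 ω ∂P) - a₀) ^ 2 :=
  multifidelity_correction_second_moment_geometric_general a₀ μ hμ W hindep hident hsq M hM hMindep
    hMdist
end

section
/- Let ρ be a measure on a measurable space X, let c, g : X → ℝ be measurable with c(x) > 0 and g(x) > 0 for ρ-a.e. x, let A, B > 0 be reals, and suppose ∫ √(c·g) dρ < ∞. Define μ*(x) = √( (A · g(x)) / (B · c(x)) ). Then μ*·c and g/μ* are ρ-integrable and ( A + ∫ μ*·c dρ ) · ( B + ∫ g/μ* dρ ) = ( √(A·B) + ∫ √(c·g) dρ )². -/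
open MeasureTheory

/-!
With `μ* = √(A g / (B c))` both integrands are constant multiples of `√(c g)`:
`μ* c = √(A/B) √(c g)` and `g / μ* = √(B/A) √(c g)`. Writing `I = ∫ √(c g) dρ`, the product
`(A + √(A/B) I)(B + √(B/A) I) = A B + 2 √(A B) I + I²` is the square `(√(A B) + I)²`.
-/

lemma sqrt_mul_div_mul_mul_self {a b c : ℝ} (g : ℝ) (ha : 0 ≤ a) (hb : 0 ≤ b) (hc : 0 ≤ c) :
    √(a * g / (b * c)) * c = √a / √b * √(c * g) := by
  rcases hc.eq_or_lt with rfl | hc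
  · simp
  calc √(a * g / (b * c)) * c = √(a * g / (b * c) * c ^ 2) := by
        rw [Real.sqrt_mul' _ (sq_nonneg c), Real.sqrt_sq hc.le]
    _ = √(a / b * (c * g)) := by congr 1; field_simp
    _ = √a / √b * √(c * g) := by rw [Real.sqrt_mul (div_nonneg ha hb), Real.sqrt_div' _ hb]

lemma div_sqrt_mul_div_mul {a b c : ℝ} (g : ℝ) (ha : 0 ≤ a) (hb : 0 ≤ b) (hc : 0 ≤ c) :
    g / √(a * g / (b * c)) = √b / √a * √(c * g) := by
  rcases le_or_gt g 0 with hg | hg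
  -- both square roots are of nonpositive numbers, hence `0`, and `g / 0 = 0`
  · have hq : a * g / (b * c) ≤ 0 :=
      div_nonpos_of_nonpos_of_nonneg (mul_nonpos_of_nonneg_of_nonpos ha hg) (mul_nonneg hb hc)
    rw [Real.sqrt_eq_zero'.mpr hq, Real.sqrt_eq_zero'.mpr (mul_nonpos_of_nonneg_of_nonpos hc hg)]
    simp
  calc g / √(a * g / (b * c)) = √(g ^ 2 / (a * g / (b * c))) := by
        rw [Real.sqrt_div' (g ^ 2) (by positivity), Real.sqrt_sq hg.le]
    _ = √(b / a * (c * g)) := by congr 1; field_simp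
    _ = √b / √a * √(c * g) := by rw [Real.sqrt_mul (div_nonneg hb ha), Real.sqrt_div' _ ha]

lemma add_mul_add_eq_sq_sqrt_mul_add {a b : ℝ} (ha : 0 < a) (hb : 0 < b) (t : ℝ) :
    (a + √a / √b * t) * (b + √b / √a * t) = (√(a * b) + t) ^ 2 := by
  obtain ⟨x, hx, rfl⟩ : ∃ x, 0 < x ∧ a = x ^ 2 := ⟨√a, Real.sqrt_pos.mpr ha, (Real.sq_sqrt ha.le).symm⟩
  obtain ⟨y, hy, rfl⟩ : ∃ y, 0 < y ∧ b = y ^ 2 := ⟨√b, Real.sqrt_pos.mpr hb, (Real.sq_sqrt hb.le).symm⟩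
  rw [← mul_pow, Real.sqrt_sq hx.le, Real.sqrt_sq hy.le, Real.sqrt_sq (mul_pos hx hy).le]
  field_simp

theorem multifidelity_performance_attained_general
    {X : Type*} [MeasurableSpace X] (ρ : Measure X)
    (c g : X → ℝ)
    (hc : ∀ᵐ x ∂ρ, 0 < c x)
    (A B : ℝ) (hA : 0 < A) (hB : 0 < B)
    (hint : Integrable (fun x => Real.sqrt (c x * g x)) ρ) :
    Integrable (fun x => Real.sqrt (A * g x / (B * c x)) * c x) ρ ∧
    Integrable (fun x => g x / Real.sqrt (A * g x / (B * c x))) ρ ∧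
    (A + ∫ x, Real.sqrt (A * g x / (B * c x)) * c x ∂ρ) *
      (B + ∫ x, g x / Real.sqrt (A * g x / (B * c x)) ∂ρ)
      = (Real.sqrt (A * B) + ∫ x, Real.sqrt (c x * g x) ∂ρ) ^ 2 := by
  have hcost : (fun x => √(A * g x / (B * c x)) * c x) =ᵐ[ρ] fun x => √A / √B * √(c x * g x) :=
    hc.mono fun x hcx => sqrt_mul_div_mul_mul_self (g x) hA.le hB.le hcx.le
  have hvar : (fun x => g x / √(A * g x / (B * c x))) =ᵐ[ρ] fun x => √B / √A * √(c x * g x) :=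
    hc.mono fun x hcx => div_sqrt_mul_div_mul (g x) hA.le hB.le hcx.le
  refine ⟨(hint.const_mul _).congr hcost.symm, (hint.const_mul _).congr hvar.symm, ?_⟩
  rw [integral_congr_ae hcost, integral_congr_ae hvar, integral_const_mul, integral_const_mul]
  exact add_mul_add_eq_sq_sqrt_mul_add hA hB _

/-- Attainment half of Lemma 2 (optimal mean function): the allocation
`μ*(x) = √(A g(x) / (B c(x)))` makes `μ*·c` and `g/μ*` integrable and
achieves the Cauchy–Schwarz lower bound
`(A + ∫ μ* c dρ)(B + ∫ g/μ* dρ) = (√(AB) + ∫ √(cg) dρ)²`. -/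
theorem multifidelity_performance_attained
    {X : Type*} [MeasurableSpace X] (ρ : Measure X)
    (c g : X → ℝ) (hcm : Measurable c) (hgm : Measurable g)
    (hc : ∀ᵐ x ∂ρ, 0 < c x) (hg : ∀ᵐ x ∂ρ, 0 < g x)
    (A B : ℝ) (hA : 0 < A) (hB : 0 < B)
    (hint : Integrable (fun x => Real.sqrt (c x * g x)) ρ) :
    Integrable (fun x => Real.sqrt (A * g x / (B * c x)) * c x) ρ ∧
    Integrable (fun x => g x / Real.sqrt (A * g x / (B * c x))) ρ ∧
    (A + ∫ x, Real.sqrt (A * g x / (B * c x)) * c x ∂ρ) *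
      (B + ∫ x, g x / Real.sqrt (A * g x / (B * c x)) ∂ρ)
      = (Real.sqrt (A * B) + ∫ x, Real.sqrt (c x * g x) ∂ρ) ^ 2 :=
  multifidelity_performance_attained_general ρ c g hc A B hA hB hint
end

section
/- Let ρ be a measure on a measurable space X, let c, g : X → ℝ be measurable with c(x) > 0 and g(x) > 0 for ρ-a.e. x, let A, B, K > 0 be reals, and suppose ∫ √(c·g) dρ < ∞. Then the following are equivalent: (i) there exists a measurable function μ : X → ℝ with μ > 0 ρ-a.e., with μ·c and g/μ ρ-integrable, such that ( A + ∫ μ·c dρ ) · ( B + ∫ g/μ dρ ) < K; (ii) √(A·B) + ∫ √(c·g) dρ < √K. -/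
/-!
For every `t > 0`, pointwise AM–GM gives `2√(AB) ≤ tA + B/t` and
`2√(cg) ≤ t·μc + (g/μ)/t`; integrating and optimising over `t` yields
`(√(AB) + ∫ √(cg))² ≤ (A + ∫ μc)(B + ∫ g/μ)` for every admissible `μ`.
Equality holds for `μ = √(A/B) · √(g/c)`, so `(√(AB) + ∫ √(cg))²` is the minimum of the
multifidelity functional and the two conditions are the same inequality before and after
taking square roots.
-/

open MeasureTheory

lemma two_mul_sqrt_mul_le_add {a b : ℝ} (ha : 0 ≤ a) (hb : 0 ≤ b) :
    2 * √(a * b) ≤ a + b := by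
  have h := two_mul_le_add_sq √a √b
  rwa [Real.sq_sqrt ha, Real.sq_sqrt hb, mul_assoc, ← Real.sqrt_mul ha] at h

lemma two_mul_sqrt_mul_le_mul_add_div {a b t : ℝ} (ha : 0 ≤ a) (hb : 0 ≤ b) (ht : 0 < t) :
    2 * √(a * b) ≤ t * a + b / t := by
  have h := two_mul_sqrt_mul_le_add (mul_nonneg ht.le ha) (div_nonneg hb ht.le)
  rwa [show t * a * (b / t) = a * b by field_simp] at h

lemma sq_le_mul_of_forall_two_mul_le {S P Q : ℝ} (hS : 0 < S) (hP : 0 < P)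
    (h : ∀ t, 0 < t → 2 * S ≤ t * P + Q / t) : S ^ 2 ≤ P * Q := by
  have h' := h (S / P) (div_pos hS hP)
  rw [div_mul_cancel₀ S hP.ne', div_div_eq_mul_div] at h'
  have hSQP : S * S ≤ Q * P := (le_div_iff₀ hS).1 (by linarith)
  nlinarith

lemma sqrt_div_mul_self_eq_sqrt_mul {a b : ℝ} (ha : 0 < a) : √(b / a) * a = √(a * b) := by
  rw [← Real.sqrt_sq ha.le, ← Real.sqrt_mul' _ (sq_nonneg a), Real.sqrt_sq ha.le]
  congr 1
  field_simp

lemma div_sqrt_div_eq_sqrt_mul {a b : ℝ} (ha : 0 < a) (hb : 0 < b) : b / √(b / a) = √(a * b) := by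
  rw [div_eq_iff (Real.sqrt_pos.2 (div_pos hb ha)).ne', ← Real.sqrt_mul (by positivity),
    show a * b * (b / a) = b ^ 2 by field_simp, Real.sqrt_sq hb.le]

lemma add_mul_add_div_eq_sq {A B S : ℝ} (hA : 0 < A) (hB : 0 < B) :
    (A + √(A / B) * S) * (B + S / √(A / B)) = (√(A * B) + S) ^ 2 := by
  obtain ⟨a, ha, rfl⟩ : ∃ a, 0 < a ∧ A = a ^ 2 := ⟨√A, Real.sqrt_pos.2 hA, (Real.sq_sqrt hA.le).symm⟩
  obtain ⟨b, hb, rfl⟩ : ∃ b, 0 < b ∧ B = b ^ 2 := ⟨√B, Real.sqrt_pos.2 hB, (Real.sq_sqrt hB.le).symm⟩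
  rw [← div_pow, ← mul_pow, Real.sqrt_sq (by positivity), Real.sqrt_sq (by positivity)]
  field_simp

section Allocation

variable {X : Type*} [MeasurableSpace X] {ρ : Measure X} {c g μ : X → ℝ}

lemma two_mul_integral_sqrt_mul_le (hc : ∀ᵐ x ∂ρ, 0 ≤ c x) (hg : ∀ᵐ x ∂ρ, 0 ≤ g x)
    (hμ : ∀ᵐ x ∂ρ, 0 < μ x) (hμc : Integrable (fun x => μ x * c x) ρ)
    (hgμ : Integrable (fun x => g x / μ x) ρ) {t : ℝ} (ht : 0 < t) :
    2 * ∫ x, √(c x * g x) ∂ρ ≤ t * ∫ x, μ x * c x ∂ρ + (∫ x, g x / μ x ∂ρ) / t := by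
  have hpoint : ∀ᵐ x ∂ρ, 2 * √(c x * g x) ≤ t * (μ x * c x) + g x / μ x / t := by
    filter_upwards [hc, hg, hμ] with x hcx hgx hμx
    have h := two_mul_sqrt_mul_le_mul_add_div (mul_nonneg hμx.le hcx) (div_nonneg hgx hμx.le) ht
    rwa [show μ x * c x * (g x / μ x) = c x * g x by field_simp] at h
  rw [← integral_const_mul, ← integral_const_mul, ← integral_div,
    ← integral_add (hμc.const_mul t) (hgμ.div_const t)]
  exact integral_mono_of_nonneg (.of_forall fun x => by positivity)
    ((hμc.const_mul t).add (hgμ.div_const t)) hpoint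

lemma sq_sqrt_mul_add_integral_sqrt_mul_le {A B : ℝ} (hA : 0 < A) (hB : 0 < B)
    (hc : ∀ᵐ x ∂ρ, 0 ≤ c x) (hg : ∀ᵐ x ∂ρ, 0 ≤ g x)
    (hμ : ∀ᵐ x ∂ρ, 0 < μ x) (hμc : Integrable (fun x => μ x * c x) ρ)
    (hgμ : Integrable (fun x => g x / μ x) ρ) :
    (√(A * B) + ∫ x, √(c x * g x) ∂ρ) ^ 2
      ≤ (A + ∫ x, μ x * c x ∂ρ) * (B + ∫ x, g x / μ x ∂ρ) := by
  have hP : 0 ≤ ∫ x, μ x * c x ∂ρ := integral_nonneg_of_ae <| by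
    filter_upwards [hc, hμ] with x hcx hμx using mul_nonneg hμx.le hcx
  refine sq_le_mul_of_forall_two_mul_le (by positivity) (by positivity) fun t ht => ?_
  have hAB := two_mul_sqrt_mul_le_mul_add_div hA.le hB.le ht
  have hcg := two_mul_integral_sqrt_mul_le hc hg hμ hμc hgμ ht
  rw [add_div]
  linarith

lemma exists_allocation_eq_sq {A B : ℝ} (hA : 0 < A) (hB : 0 < B)
    (hcm : Measurable c) (hgm : Measurable g) (hc : ∀ᵐ x ∂ρ, 0 < c x) (hg : ∀ᵐ x ∂ρ, 0 < g x)
    (hint : Integrable (fun x => √(c x * g x)) ρ) :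
    ∃ μ : X → ℝ, Measurable μ ∧ (∀ᵐ x ∂ρ, 0 < μ x) ∧
      Integrable (fun x => μ x * c x) ρ ∧ Integrable (fun x => g x / μ x) ρ ∧
      (A + ∫ x, μ x * c x ∂ρ) * (B + ∫ x, g x / μ x ∂ρ)
        = (√(A * B) + ∫ x, √(c x * g x) ∂ρ) ^ 2 := by
  set t := √(A / B)
  have ht : 0 < t := Real.sqrt_pos.2 (div_pos hA hB)
  have hμc : (fun x => t * √(g x / c x) * c x) =ᵐ[ρ] fun x => t * √(c x * g x) := by
    filter_upwards [hc] with x hcx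
    rw [mul_assoc, sqrt_div_mul_self_eq_sqrt_mul hcx]
  have hgμ : (fun x => g x / (t * √(g x / c x))) =ᵐ[ρ] fun x => √(c x * g x) / t := by
    filter_upwards [hc, hg] with x hcx hgx
    rw [div_mul_eq_div_div_swap, div_sqrt_div_eq_sqrt_mul hcx hgx]
  refine ⟨fun x => t * √(g x / c x), by fun_prop, ?_, (hint.const_mul t).congr hμc.symm,
    (hint.div_const t).congr hgμ.symm, ?_⟩
  · filter_upwards [hc, hg] with x hcx hgx
    have := div_pos hgx hcx
    positivity
  · rw [integral_congr_ae hμc, integral_congr_ae hgμ, integral_const_mul, integral_div]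
    exact add_mul_add_div_eq_sq hA hB

end Allocation

theorem multifidelity_improvement_iff_general
    {X : Type*} [MeasurableSpace X] (ρ : Measure X)
    (c g : X → ℝ) (hcm : Measurable c) (hgm : Measurable g)
    (hc : ∀ᵐ x ∂ρ, 0 < c x) (hg : ∀ᵐ x ∂ρ, 0 < g x)
    (A B K : ℝ) (hA : 0 < A) (hB : 0 < B)
    (hint : Integrable (fun x => Real.sqrt (c x * g x)) ρ) :
    (∃ μ : X → ℝ, Measurable μ ∧ (∀ᵐ x ∂ρ, 0 < μ x) ∧
        Integrable (fun x => μ x * c x) ρ ∧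
        Integrable (fun x => g x / μ x) ρ ∧
        (A + ∫ x, μ x * c x ∂ρ) * (B + ∫ x, g x / μ x ∂ρ) < K)
      ↔ Real.sqrt (A * B) + ∫ x, Real.sqrt (c x * g x) ∂ρ < Real.sqrt K := by
  rw [Real.lt_sqrt (by positivity)]
  constructor
  · rintro ⟨μ, -, hμ, hμc, hgμ, hlt⟩
    exact (sq_sqrt_mul_add_integral_sqrt_mul_le hA hB (hc.mono fun _ => le_of_lt)
      (hg.mono fun _ => le_of_lt) hμ hμc hgμ).trans_lt hlt
  · intro h
    obtain ⟨μ, hμm, hμ, hμc, hgμ, heq⟩ := exists_allocation_eq_sq hA hB hcm hgm hc hg hint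
    exact ⟨μ, hμm, hμ, hμc, hgμ, heq ▸ h⟩

/-- Corollary 2 (existence of an improving multifidelity allocation): there is
a positive measurable allocation `μ` with `μ·c` and `g/μ` integrable and
`(A + ∫ μ c dρ)(B + ∫ g/μ dρ) < K` if and only if
`√(AB) + ∫ √(cg) dρ < √K`. -/
theorem multifidelity_improvement_iff
    {X : Type*} [MeasurableSpace X] (ρ : Measure X)
    (c g : X → ℝ) (hcm : Measurable c) (hgm : Measurable g)
    (hc : ∀ᵐ x ∂ρ, 0 < c x) (hg : ∀ᵐ x ∂ρ, 0 < g x)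
    (A B K : ℝ) (hA : 0 < A) (hB : 0 < B) (hK : 0 < K)
    (hint : Integrable (fun x => Real.sqrt (c x * g x)) ρ) :
    (∃ μ : X → ℝ, Measurable μ ∧ (∀ᵐ x ∂ρ, 0 < μ x) ∧
        Integrable (fun x => μ x * c x) ρ ∧
        Integrable (fun x => g x / μ x) ρ ∧
        (A + ∫ x, μ x * c x ∂ρ) * (B + ∫ x, g x / μ x ∂ρ) < K)
      ↔ Real.sqrt (A * B) + ∫ x, Real.sqrt (c x * g x) ∂ρ < Real.sqrt K :=
  multifidelity_improvement_iff_general ρ c g hcm hgm hc hg A B K hA hB hint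
end

section
/- Let ι be a finite type, let c, V : ι → ℝ with c_k > 0 and V_k > 0 for all k, and let A, B > 0 be reals. Then a vector ν : ι → ℝ with ν_k > 0 for all k satisfies the stationarity conditions ν_k² · c_k · ( B + Σ_{j} V_j / ν_j ) = V_k · ( A + Σ_{j} c_j ν_j ) for every k if and only if ν_k = √( (A · V_k) / (B · c_k) ) for every k. -/
/-!
Write `S = B + ∑ V_j/ν_j` and `T = A + ∑ c_j ν_j`. Dividing the `k`-th stationarity equation by
`ν_k` and summing over `k` gives `(T - A) S = (S - B) T`, i.e. the balance `A S = B T`; dividing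
`ν_k² c_k B = V_k A` by `ν_k` and summing gives the same balance. Under it, `ν_k² c_k S = V_k T`
and `ν_k² c_k B = V_k A` are equivalent, and the latter says `ν_k = √(A V_k / (B c_k))`.
-/

theorem mul_eq_mul_iff_of_mul_eq_mul {M : Type*} [CommMonoidWithZero M] [IsCancelMulZero M]
    {x y A B S T : M} (hB : B ≠ 0) (hS : S ≠ 0) (h : A * S = B * T) :
    x * S = y * T ↔ x * B = y * A := by
  have hyT : y * T * B = y * A * S := by rw [mul_assoc, mul_comm T, ← h, mul_assoc]
  rw [← mul_left_inj' hB, hyT, mul_right_comm, mul_left_inj' hS]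

theorem sum_mul_mul_eq_sum_div_mul {ι K : Type*} [Fintype ι] [Field K] {c V ν : ι → K}
    {p q : K} (hν : ∀ k, ν k ≠ 0) (h : ∀ k, ν k ^ 2 * c k * p = V k * q) :
    (∑ k, c k * ν k) * p = (∑ k, V k / ν k) * q := by
  rw [Finset.sum_mul, Finset.sum_mul]
  refine Finset.sum_congr rfl fun k _ => ?_
  field_simp [hν k]
  linear_combination h k

theorem piecewise_performance_stationary_iff_general
    {ι : Type*} [Fintype ι] (c V : ι → ℝ)
    (hc : ∀ k, 0 < c k) (hV : ∀ k, 0 < V k)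
    (A B : ℝ) (hB : 0 < B)
    (ν : ι → ℝ) (hν : ∀ k, 0 < ν k) :
    (∀ k, ν k ^ 2 * c k * (B + ∑ j, V j / ν j)
        = V k * (A + ∑ j, c j * ν j))
      ↔ ∀ k, ν k = Real.sqrt (A * V k / (B * c k)) := by
  set S := B + ∑ j, V j / ν j
  set T := A + ∑ j, c j * ν j
  have hS : 0 < S :=
    add_pos_of_pos_of_nonneg hB (Finset.sum_nonneg fun j _ => (div_pos (hV j) (hν j)).le)
  have hν₀ : ∀ k, ν k ≠ 0 := fun k => (hν k).ne'
  have hopt : ∀ k, ν k = √(A * V k / (B * c k)) ↔ ν k ^ 2 * c k * B = V k * A := fun k => by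
    rw [eq_comm, Real.sqrt_eq_iff_mul_self_eq_of_pos (hν k),
      eq_div_iff (mul_pos hB (hc k)).ne']
    constructor <;> intro h <;> linear_combination h
  simp only [hopt]
  constructor
  · intro h
    have hbal : A * S = B * T := by
      linear_combination -(sum_mul_mul_eq_sum_div_mul hν₀ h)
    exact fun k => (mul_eq_mul_iff_of_mul_eq_mul hB.ne' hS.ne' hbal).1 (h k)
  · intro h
    have hbal : A * S = B * T := by
      linear_combination -(sum_mul_mul_eq_sum_div_mul hν₀ h)
    exact fun k => (mul_eq_mul_iff_of_mul_eq_mul hB.ne' hS.ne' hbal).2 (h k)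

/-- The optimal piecewise-constant allocation `ν*` is the unique positive
stationary point of the performance function `J_D`: a positive vector `ν`
satisfies `ν_k² c_k (B + ∑_j V_j/ν_j) = V_k (A + ∑_j c_j ν_j)` for all `k`
if and only if `ν_k = √(A V_k / (B c_k))` for all `k`. -/
theorem piecewise_performance_stationary_iff
    {ι : Type*} [Fintype ι] (c V : ι → ℝ)
    (hc : ∀ k, 0 < c k) (hV : ∀ k, 0 < V k)
    (A B : ℝ) (hA : 0 < A) (hB : 0 < B)
    (ν : ι → ℝ) (hν : ∀ k, 0 < ν k) :
    (∀ k, ν k ^ 2 * c k * (B + ∑ j, V j / ν j)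
        = V k * (A + ∑ j, c j * ν j))
      ↔ ∀ k, ν k = Real.sqrt (A * V k / (B * c k)) :=
  piecewise_performance_stationary_iff_general c V hc hV A B hB ν hν
end
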